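/- A Hausdorff topological group G is ω-narrow and a q-space if and only if for each open neighborhood O of the identity in G there is a countably compact invariant (normal) subgroup H which is of countable character in G, such that H ⊆ O, the canonical quotient mapping p : G → G/H is quasi-perfect, and the quotient space G/H is separable and metrizable. -/

import Mathlib

open Filter Topology Set Pointwise TopologicalSpace

universe u

section Defs

variable {X : Type*}

/-- A subset `s` of a topological space is countably compact (in the ambient space) if every
countable open cover of `s` (indexed by `ℕ`) has a finite subcover. -/
def IsCountablyCompactIn [TopologicalSpace X] (s : Set X) : Prop :=
  ∀ U : ℕ → Set X, (∀ n, IsOpen (U n)) → s ⊆ ⋃ n, U n → ∃ t : Finset ℕ, s ⊆ ⋃ n ∈ t, U n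

/-- `U` is a q-sequence at `x`: a sequence of open neighbourhoods of `x` such that every
sequence of points chosen from the `U n` has an accumulation (cluster) point in `X`. -/
def IsQSequenceAt [TopologicalSpace X] (x : X) (U : ℕ → Set X) : Prop :=
  (∀ n, IsOpen (U n) ∧ x ∈ U n) ∧
    ∀ u : ℕ → X, (∀ n, u n ∈ U n) → ∃ p : X, MapClusterPt p Filter.atTop u

/-- A space is a q-space if every point has a q-sequence. -/
def QSpace (X : Type*) [TopologicalSpace X] : Prop :=
  ∀ x : X, ∃ U : ℕ → Set X, IsQSequenceAt x U

/-- A space is a strict q-space if every point has a q-sequence whose intersection is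
sequentially compact. -/
def StrictQSpace (X : Type*) [TopologicalSpace X] : Prop :=
  ∀ x : X, ∃ U : ℕ → Set X, IsQSequenceAt x U ∧ IsSeqCompact (⋂ n, U n)

/-- `U` is a strong q-sequence at `x`: a sequence of open neighbourhoods of `x` such that every
sequence of points chosen from the `U n` has a convergent subsequence. -/
def IsStrongQSequenceAt [TopologicalSpace X] (x : X) (U : ℕ → Set X) : Prop :=
  (∀ n, IsOpen (U n) ∧ x ∈ U n) ∧
    ∀ u : ℕ → X, (∀ n, u n ∈ U n) →
      ∃ (p : X) (φ : ℕ → ℕ), StrictMono φ ∧ Filter.Tendsto (u ∘ φ) Filter.atTop (nhds p)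

/-- A space is a strong q-space if every point has a strong q-sequence. -/
def StrongQSpace (X : Type*) [TopologicalSpace X] : Prop :=
  ∀ x : X, ∃ U : ℕ → Set X, IsStrongQSequenceAt x U

/-- A subset `A` is of countable character in `X` if there is a countable family of open
neighbourhoods of `A` such that every open neighbourhood of `A` contains a member of it. -/
def HasCountableCharacter [TopologicalSpace X] (A : Set X) : Prop :=
  ∃ U : ℕ → Set X, (∀ n, IsOpen (U n) ∧ A ⊆ U n) ∧
    ∀ W : Set X, IsOpen W → A ⊆ W → ∃ n, U n ⊆ W

/-- A topological group is ω-balanced if for every neighbourhood `U` of the identity there is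
a countable family `γ` of open neighbourhoods of the identity such that for every `x` some
`V ∈ γ` satisfies `xVx⁻¹ ⊆ U`. -/
def OmegaBalanced (G : Type*) [Group G] [TopologicalSpace G] : Prop :=
  ∀ U : Set G, U ∈ nhds (1 : G) → ∃ γ : Set (Set G), γ.Countable ∧
    (∀ V ∈ γ, IsOpen V ∧ (1 : G) ∈ V) ∧
    ∀ x : G, ∃ V ∈ γ, ∀ v ∈ V, x * v * x⁻¹ ∈ U

/-- A topological group is ω-narrow if for every open neighbourhood `V` of the identity there
is a countable set `A` with `A * V = G`. -/
def OmegaNarrow (G : Type*) [Group G] [TopologicalSpace G] : Prop :=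
  ∀ V : Set G, IsOpen V → (1 : G) ∈ V → ∃ A : Set G, A.Countable ∧ A * V = Set.univ

/-- A topological group is feathered if it has a nonempty compact subset of countable
character. -/
def IsFeathered (G : Type*) [Group G] [TopologicalSpace G] : Prop :=
  ∃ K : Set G, K.Nonempty ∧ IsCompact K ∧ HasCountableCharacter K

/-- A subgroup `H` of a topological group is neutral if for every open neighbourhood `U` of the
identity there is an open neighbourhood `V` of the identity with `HV ⊆ UH`. -/
def IsNeutralSubgroup {G : Type*} [Group G] [TopologicalSpace G] (H : Subgroup G) : Prop :=
  ∀ U : Set G, IsOpen U → (1 : G) ∈ U →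
    ∃ V : Set G, IsOpen V ∧ (1 : G) ∈ V ∧ (H : Set G) * V ⊆ U * (H : Set G)

end Defs

/-!
Forward: a q-sequence at `1` is refined to open symmetric neighbourhoods `V n` of `1` with
`V (n + 1) * V (n + 1) ⊆ V n`; every sequence `u` with `u n ∈ V n` then clusters in the closed
subgroup `⋂ n, V n`. Intersecting `V n` with its conjugates by the first `n` terms of a sequence
`d` with `range d * V n = G` (ω-narrowness) preserves this and makes the intersection `H` normal.
The sets `V n` then form a base at `H`, which yields countable character, closedness of
`G → G ⧸ H`, and a first countable ω-narrow, hence separable and metrizable, quotient.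

Backward: a countably compact subgroup is covered by finitely many translates of any neighbourhood
of `1`; with a countable dense set of cosets this gives ω-narrowness. Preimages of a countable base
at `xH` form a q-sequence at `x`, since a closed map with countably compact fibres turns
convergence of `f ∘ u` into clustering of `u`.
-/

section ClusterPoints

variable {X Y : Type*} [TopologicalSpace X] [TopologicalSpace Y]

theorem isCountablyCompactIn_iff_forall_exists_mapClusterPt {s : Set X} :
    IsCountablyCompactIn s ↔
      ∀ u : ℕ → X, (∀ n, u n ∈ s) → ∃ z ∈ s, MapClusterPt z atTop u := by
  constructor
  · intro hs u hu
    by_contra! h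
    have hcover : s ⊆ ⋃ m, (closure (u '' Ici m))ᶜ := fun x hx => by
      simpa [mapClusterPt_atTop_iff_forall_mem_closure] using h x hx
    obtain ⟨t, ht⟩ := hs _ (fun m => isClosed_closure.isOpen_compl) hcover
    obtain ⟨m, hmt, hm⟩ := mem_iUnion₂.1 (ht (hu (t.sup id)))
    exact hm (subset_closure ⟨t.sup id, Finset.le_sup (f := id) hmt, rfl⟩)
  · intro h U hUo hsU
    by_contra! hnot
    choose v hvs hvU using fun n => not_subset.1 (hnot (Finset.range (n + 1)))
    obtain ⟨z, hzs, hz⟩ := h v hvs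
    obtain ⟨m, hzm⟩ := mem_iUnion.1 (hsU hzs)
    obtain ⟨n, hmn, hvn⟩ := (hz.frequently ((hUo m).mem_nhds hzm)).forall_exists_of_atTop m
    exact hvU n (mem_biUnion (Finset.mem_range.2 (Nat.lt_succ_of_le hmn)) hvn)

theorem IsCountablyCompactIn.image {s : Set X} (hs : IsCountablyCompactIn s) {f : X → Y}
    (hf : Continuous f) : IsCountablyCompactIn (f '' s) := by
  intro U hUo hsU
  obtain ⟨t, ht⟩ := hs (fun n => f ⁻¹' U n) (fun n => (hUo n).preimage hf)
    (by simpa [image_subset_iff] using hsU)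
  exact ⟨t, by simpa [image_subset_iff] using ht⟩

theorem IsClosedMap.exists_mapClusterPt_of_tendsto {f : X → Y} (hf : IsClosedMap f) {y : Y}
    (hy : IsCountablyCompactIn (f ⁻¹' {y})) {u : ℕ → X} (hu : Tendsto (f ∘ u) atTop (𝓝 y)) :
    ∃ z, MapClusterPt z atTop u := by
  have hfiber : ∀ m, ∃ x ∈ closure (u '' Ici m), f x = y := fun m =>
    (hf _ isClosed_closure).mem_of_tendsto hu <| eventually_atTop.2
      ⟨m, fun n hn => mem_image_of_mem f (subset_closure (mem_image_of_mem u hn))⟩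
  choose x hxu hxy using hfiber
  obtain ⟨z, -, hz⟩ := isCountablyCompactIn_iff_forall_exists_mapClusterPt.1 hy x hxy
  refine ⟨z, mapClusterPt_atTop_iff_forall_mem_closure.2 fun m => ?_⟩
  have htail : x '' Ici m ⊆ closure (u '' Ici m) := by
    rintro _ ⟨k, hk, rfl⟩
    exact closure_mono (image_mono (Ici_subset_Ici.2 hk)) (hxu k)
  exact closure_minimal htail isClosed_closure (mapClusterPt_atTop_iff_forall_mem_closure.1 hz m)

theorem IsQSequenceAt.mono {x : X} {U V : ℕ → Set X} (hU : IsQSequenceAt x U)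
    (hVo : ∀ n, IsOpen (V n)) (hxV : ∀ n, x ∈ V n) (hVU : ∀ n, V n ⊆ U n) :
    IsQSequenceAt x V :=
  ⟨fun n => ⟨hVo n, hxV n⟩, fun u hu => hU.2 u fun n => hVU n (hu n)⟩

theorem qSpace_of_isClosedMap [FirstCountableTopology Y] {f : X → Y} (hfc : Continuous f)
    (hf : IsClosedMap f) (hfib : ∀ y, IsCountablyCompactIn (f ⁻¹' {y})) : QSpace X := by
  intro x
  obtain ⟨s, hs⟩ := (𝓝 (f x)).exists_antitone_basis
  refine ⟨fun n => f ⁻¹' interior (s n), ⟨fun n => ⟨isOpen_interior.preimage hfc,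
    mem_interior_iff_mem_nhds.2 (hs.mem n)⟩, fun u hu => ?_⟩⟩
  exact hf.exists_mapClusterPt_of_tendsto (hfib _) (hs.tendsto fun n => interior_subset (hu n))

theorem HasCountableCharacter.isCountablyGenerated_nhds {f : X → Y} (hfc : Continuous f)
    (hfo : IsOpenMap f) {x : X} (h : HasCountableCharacter (f ⁻¹' {f x})) :
    (𝓝 (f x)).IsCountablyGenerated := by
  obtain ⟨U, hU, hUmin⟩ := h
  refine HasBasis.isCountablyGenerated (p := fun _ : ℕ => True) (s := fun n => f '' U n)
    ⟨fun N => ⟨fun hN => ?_, fun ⟨n, _, hn⟩ => ?_⟩⟩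
  · obtain ⟨n, hn⟩ := hUmin _ (isOpen_interior.preimage hfc) fun x' (hx' : f x' = f x) => by
      rw [mem_preimage, hx']
      exact mem_interior_iff_mem_nhds.2 hN
    exact ⟨n, trivial, (image_subset_iff.2 hn).trans interior_subset⟩
  · exact mem_of_superset ((hfo _ (hU n).1).mem_nhds ⟨x, (hU n).2 rfl, rfl⟩) hn

end ClusterPoints

section OmegaNarrow

variable {G : Type*} [Group G] [TopologicalSpace G]

theorem OmegaNarrow.of_surjective {G' : Type*} [Group G'] [TopologicalSpace G'] {f : G →* G'}
    (hfc : Continuous f) (hfs : Function.Surjective f) (h : OmegaNarrow G) : OmegaNarrow G' := by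
  intro V hVo hV1
  obtain ⟨A, hAc, hA⟩ := h _ (hVo.preimage hfc) (by rwa [mem_preimage, map_one])
  refine ⟨f '' A, hAc.image f, ?_⟩
  rw [← image_preimage_eq V hfs, ← image_mul, hA, image_univ, hfs.range_eq]

theorem OmegaNarrow.exists_seq_range_mul_eq_univ (h : OmegaNarrow G) {V : ℕ → Set G}
    (hVo : ∀ n, IsOpen (V n)) (hV1 : ∀ n, (1 : G) ∈ V n) :
    ∃ d : ℕ → G, d 0 = 1 ∧ ∀ n, range d * V n = univ := by
  choose A hAc hA using fun n => h (V n) (hVo n) (hV1 n)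
  obtain ⟨f, hf⟩ := ((countable_iUnion hAc).insert 1).exists_eq_range (insert_nonempty _ _)
  obtain ⟨i, hi⟩ : (1 : G) ∈ range f := hf ▸ mem_insert _ _
  refine ⟨f ∘ Equiv.swap 0 i, by simp [hi], fun n => eq_univ_of_univ_subset ?_⟩
  rw [← hA n, EquivLike.range_comp, ← hf]
  exact mul_subset_mul_right ((subset_iUnion A n).trans (subset_insert _ _))

end OmegaNarrow

def conjChain {G : Type*} [Group G] (V : ℕ → Set G) (d : ℕ → G) (m : ℕ) : Set G :=
  {g | ∀ i ≤ m, (d i)⁻¹ * g * d i ∈ V m}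

theorem conjChain_subset {G : Type*} [Group G] {V : ℕ → Set G} {d : ℕ → G} (hd : d 0 = 1)
    (m : ℕ) : conjChain V d m ⊆ V m :=
  fun g hg => by simpa [hd] using hg 0 (Nat.zero_le m)

section TopologicalGroup

variable {G : Type*} [Group G] [TopologicalSpace G] [IsTopologicalGroup G]

theorem exists_isOpen_inv_mem_mul_subset {W : Set G} (hW : W ∈ 𝓝 (1 : G)) :
    ∃ V : Set G, IsOpen V ∧ (1 : G) ∈ V ∧ (∀ g ∈ V, g⁻¹ ∈ V) ∧ V * V ⊆ W := by
  obtain ⟨V, hVo, hV1, hVW⟩ := exists_open_nhds_one_mul_subset hW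
  refine ⟨V ∩ V⁻¹, hVo.inter hVo.inv, ⟨hV1, by simpa using hV1⟩,
    fun g hg => ⟨hg.2, by simpa using hg.1⟩, ?_⟩
  exact (mul_subset_mul inter_subset_left inter_subset_left).trans hVW

theorem IsCountablyCompactIn.exists_finite_subset_mul {s W : Set G}
    (hs : IsCountablyCompactIn s) (hW : W ∈ 𝓝 (1 : G)) : ∃ F : Set G, F.Finite ∧ s ⊆ F * W := by
  obtain ⟨V, hVo, hV1, hVinv, hVW⟩ := exists_isOpen_inv_mem_mul_subset hW
  by_contra! h
  obtain ⟨u, hus, hu⟩ := exists_seq_of_forall_finset_exists (· ∈ s) (fun x y => x⁻¹ * y ∉ W)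
    fun F _ => by
      obtain ⟨y, hys, hyF⟩ := not_subset.1 (h F F.finite_toSet)
      exact ⟨y, hys, fun x hx hxy => hyF ⟨x, hx, x⁻¹ * y, hxy, by group⟩⟩
  obtain ⟨z, -, hz⟩ := isCountablyCompactIn_iff_forall_exists_mapClusterPt.1 hs u hus
  have hzV : (z⁻¹ * ·) ⁻¹' V ∈ 𝓝 z :=
    (hVo.preimage (continuous_const_mul _)).mem_nhds (by simpa using hV1)
  obtain ⟨i, -, hi⟩ := (hz.frequently hzV).forall_exists_of_atTop 0
  obtain ⟨j, hij, hj⟩ := (hz.frequently hzV).forall_exists_of_atTop (i + 1)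
  have hquot : (u i)⁻¹ * u j = (z⁻¹ * u i)⁻¹ * (z⁻¹ * u j) := by group
  exact hu i j hij (hquot ▸ hVW (mul_mem_mul (hVinv _ hi) hj))

theorem omegaNarrow_of_isCountablyCompactIn_of_separableSpace {H : Subgroup G}
    (hH : IsCountablyCompactIn (H : Set G)) [SeparableSpace (G ⧸ H)] : OmegaNarrow G := by
  intro V hVo hV1
  obtain ⟨W, hWo, hW1, hWinv, hWV⟩ := exists_isOpen_inv_mem_mul_subset (hVo.mem_nhds hV1)
  obtain ⟨F, hFfin, hHF⟩ := hH.exists_finite_subset_mul (hWo.mem_nhds hW1)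
  obtain ⟨D, hDc, hDd⟩ := exists_countable_dense (G ⧸ H)
  obtain ⟨rep, hrep⟩ := (QuotientGroup.mk_surjective (s := H)).hasRightInverse
  refine ⟨rep '' D * F, image2_mul (s := rep '' D) ▸ (hDc.image rep).image2 hFfin.countable _,
    eq_univ_of_forall fun g => ?_⟩
  -- a coset from `D` meets `g * W`, and the countably compact `H` moves it only by `F * W`
  obtain ⟨_, ⟨_, ⟨w, hw, rfl⟩, rfl⟩, hwD⟩ := hDd.inter_open_nonempty _
    (QuotientGroup.isOpenMap_coe _ (isOpenMap_mul_left g _ hWo))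
    ⟨_, mem_image_of_mem _ (mem_image_of_mem _ hW1)⟩
  obtain ⟨f, hf, w', hw', hfw'⟩ := hHF (QuotientGroup.eq.1 (hrep (g * w)))
  have hg : g = (rep (g * w) * f) * (w' * w⁻¹) := by
    have hfw : f * w' = (rep (g * w))⁻¹ * (g * w) := hfw'
    calc g = rep (g * w) * ((rep (g * w))⁻¹ * (g * w)) * w⁻¹ := by group
      _ = (rep (g * w) * f) * (w' * w⁻¹) := by rw [← hfw]; group
  exact hg ▸ mul_mem_mul (mul_mem_mul (mem_image_of_mem _ hwD) hf)
    (hWV (mul_mem_mul hw' (hWinv _ hw)))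

theorem OmegaNarrow.separableSpace [(𝓝 (1 : G)).IsCountablyGenerated] (h : OmegaNarrow G) :
    SeparableSpace G := by
  obtain ⟨W, hW⟩ := (𝓝 (1 : G)).exists_antitone_basis
  choose A hAc hA using fun n =>
    h (interior (W n)) isOpen_interior (mem_interior_iff_mem_nhds.2 (hW.mem n))
  refine ⟨⋃ n, A n, countable_iUnion hAc, dense_iff_inter_open.2 fun U hUo ⟨g, hgU⟩ => ?_⟩
  have hU : (fun w => g * w⁻¹) ⁻¹' U ∈ 𝓝 (1 : G) :=
    (continuous_const.mul continuous_inv).continuousAt.preimage_mem_nhds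
      (by simpa using hUo.mem_nhds hgU)
  obtain ⟨n, -, hn⟩ := hW.toHasBasis.mem_iff.1 hU
  obtain ⟨a, ha, w, hw, rfl⟩ : g ∈ A n * interior (W n) := hA n ▸ mem_univ g
  exact ⟨a, by simpa using hn (interior_subset hw), mem_iUnion.2 ⟨n, ha⟩⟩

theorem IsTopologicalGroup.secondCountableTopology_of_separable [SeparableSpace G]
    [(𝓝 (1 : G)).IsCountablyGenerated] : SecondCountableTopology G := by
  let := IsTopologicalGroup.leftUniformSpace G
  have : (uniformity G).IsCountablyGenerated := comap.isCountablyGenerated _ _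
  exact UniformSpace.secondCountable_of_separable G

theorem QuotientGroup.isCountablyGenerated_nhds_one {N : Subgroup G} [N.Normal]
    (hN : HasCountableCharacter (N : Set G)) : (𝓝 (1 : G ⧸ N)).IsCountablyGenerated := by
  rw [← QuotientGroup.preimage_mk_one] at hN
  simpa using hN.isCountablyGenerated_nhds QuotientGroup.continuous_mk QuotientGroup.isOpenMap_coe

theorem QuotientGroup.isCountablyCompactIn_preimage_mk {N : Subgroup G}
    (hN : IsCountablyCompactIn (N : Set G)) (y : G ⧸ N) :
    IsCountablyCompactIn ((QuotientGroup.mk : G → G ⧸ N) ⁻¹' {y}) := by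
  obtain ⟨g, rfl⟩ := QuotientGroup.mk_surjective y
  rw [← image_singleton, QuotientGroup.preimage_image_mk_eq_mul, singleton_mul]
  exact hN.image (continuous_const_mul g)

end TopologicalGroup

section SqrtChain

variable {G : Type*} [Group G] [TopologicalSpace G]

structure IsSqrtChain (V : ℕ → Set G) : Prop where
  isOpen (n : ℕ) : IsOpen (V n)
  one_mem (n : ℕ) : (1 : G) ∈ V n
  inv_mem (n : ℕ) : ∀ g ∈ V n, g⁻¹ ∈ V n
  mul_subset (n : ℕ) : V (n + 1) * V (n + 1) ⊆ V n

namespace IsSqrtChain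

variable {V : ℕ → Set G}

theorem succ_subset (hV : IsSqrtChain V) (n : ℕ) : V (n + 1) ⊆ V n :=
  (subset_mul_left _ (hV.one_mem _)).trans (hV.mul_subset n)

theorem antitone (hV : IsSqrtChain V) : Antitone V :=
  antitone_nat_of_succ_le hV.succ_subset

def subgroup (hV : IsSqrtChain V) : Subgroup G where
  carrier := ⋂ n, V n
  one_mem' := mem_iInter.2 hV.one_mem
  mul_mem' ha hb := mem_iInter.2 fun n =>
    hV.mul_subset n (mul_mem_mul (mem_iInter.1 ha _) (mem_iInter.1 hb _))
  inv_mem' ha := mem_iInter.2 fun n => hV.inv_mem n _ (mem_iInter.1 ha n)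

theorem mem_subgroup (hV : IsSqrtChain V) {g : G} : g ∈ hV.subgroup ↔ ∀ n, g ∈ V n :=
  mem_iInter

end IsSqrtChain

theorem normal_subgroup_conjChain {V : ℕ → Set G} {d : ℕ → G} (hV : IsSqrtChain V)
    (hB : IsSqrtChain (conjChain V d)) (hd : ∀ n, range d * V n = univ) :
    hB.subgroup.Normal := by
  have hconj : ∀ g ∈ hB.subgroup, ∀ i n, (d i)⁻¹ * g * d i ∈ V n := fun g hg i n =>
    hV.antitone (le_max_right i n) (hB.mem_subgroup.1 hg (max i n) i (le_max_left i n))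
  -- writing `x⁻¹ = d j * v` with `v` small, `x g x⁻¹ = v⁻¹ ((d j)⁻¹ g d j) v`
  have hsmall : ∀ g ∈ hB.subgroup, ∀ x : G, ∀ m, x * g * x⁻¹ ∈ V m := by
    intro g hg x m
    obtain ⟨_, ⟨j, rfl⟩, v, hv, hxv⟩ : x⁻¹ ∈ range d * V (m + 2) := hd (m + 2) ▸ mem_univ _
    have hx : x * g * x⁻¹ = v⁻¹ * ((d j)⁻¹ * g * d j) * v := by
      rw [← inv_inv x, ← hxv]; group
    exact hx ▸ hV.mul_subset m (mul_mem_mul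
      (hV.mul_subset (m + 1) (mul_mem_mul (hV.inv_mem _ _ hv) (hconj g hg j (m + 2))))
      (hV.succ_subset (m + 1) hv))
  refine ⟨fun g hg y => hB.mem_subgroup.2 fun m i _ => ?_⟩
  have hy : (d i)⁻¹ * (y * g * y⁻¹) * d i = ((d i)⁻¹ * y) * g * ((d i)⁻¹ * y)⁻¹ := by group
  exact hy ▸ hsmall g hg _ m

variable [IsTopologicalGroup G]

theorem exists_isSqrtChain_subset (W : ℕ → Set G) (hW : ∀ n, W n ∈ 𝓝 (1 : G)) :
    ∃ V : ℕ → Set G, IsSqrtChain V ∧ ∀ n, V n ⊆ W n := by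
  choose! r hro hr1 hrinv hrmul using
    fun U (hU : U ∈ 𝓝 (1 : G)) => exists_isOpen_inv_mem_mul_subset hU
  let R : ℕ → Set G := fun n => Nat.rec (W 0) (fun k Rk => r Rk ∩ W (k + 1)) n
  have hR : ∀ n, R n ∈ 𝓝 (1 : G) := by
    intro n
    induction n with
    | zero => exact hW 0
    | succ k ih => exact inter_mem ((hro _ ih).mem_nhds (hr1 _ ih)) (hW (k + 1))
  refine ⟨fun n => r (R n), ⟨fun n => hro _ (hR n), fun n => hr1 _ (hR n),
    fun n => hrinv _ (hR n), fun n => (hrmul _ (hR (n + 1))).trans inter_subset_left⟩,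
    fun n => (subset_mul_left _ (hr1 _ (hR n))).trans ((hrmul _ (hR n)).trans ?_)⟩
  cases n with
  | zero => exact subset_rfl
  | succ k => exact inter_subset_right

namespace IsSqrtChain

variable {V : ℕ → Set G}

theorem closure_succ_subset (hV : IsSqrtChain V) (n : ℕ) : closure (V (n + 1)) ⊆ V n :=
  (closure_subset_mul_self_of_mem_nhds_one ((hV.isOpen _).mem_nhds (hV.one_mem _))).trans
    (hV.mul_subset n)

theorem isClosed_subgroup (hV : IsSqrtChain V) : IsClosed (hV.subgroup : Set G) :=
  isClosed_of_closure_subset fun _ hg => hV.mem_subgroup.2 fun n =>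
    hV.closure_succ_subset n (closure_mono (fun _ hx => hV.mem_subgroup.1 hx (n + 1)) hg)

theorem mem_subgroup_of_mapClusterPt (hV : IsSqrtChain V) {u : ℕ → G} {z : G}
    (hu : ∀ n, u n ∈ V n) (hz : MapClusterPt z atTop u) : z ∈ hV.subgroup :=
  hV.mem_subgroup.2 fun n => hV.closure_succ_subset n <|
    isClosed_closure.mem_of_mapClusterPt hz <|
      eventually_atTop.2 ⟨n + 1, fun k hk => subset_closure (hV.antitone hk (hu k))⟩

theorem exists_mapClusterPt_mem_subgroup (hV : IsSqrtChain V) (hq : IsQSequenceAt (1 : G) V)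
    {u : ℕ → G} (hu : ∀ n, u n ∈ V n) : ∃ z ∈ hV.subgroup, MapClusterPt z atTop u := by
  obtain ⟨z, hz⟩ := hq.2 u hu
  exact ⟨z, hV.mem_subgroup_of_mapClusterPt hu hz, hz⟩

theorem isCountablyCompactIn_subgroup (hV : IsSqrtChain V) (hq : IsQSequenceAt (1 : G) V) :
    IsCountablyCompactIn (hV.subgroup : Set G) :=
  isCountablyCompactIn_iff_forall_exists_mapClusterPt.2 fun _ hu =>
    hV.exists_mapClusterPt_mem_subgroup hq fun n => hV.mem_subgroup.1 (hu n) n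

theorem hasCountableCharacter_subgroup (hV : IsSqrtChain V) (hq : IsQSequenceAt (1 : G) V) :
    HasCountableCharacter (hV.subgroup : Set G) := by
  refine ⟨V, fun n => ⟨hV.isOpen n, fun g hg => hV.mem_subgroup.1 hg n⟩, fun W hWo hHW => ?_⟩
  by_contra! h
  choose u huV huW using fun n => not_subset.1 (h n)
  obtain ⟨z, hzH, hz⟩ := hV.exists_mapClusterPt_mem_subgroup hq huV
  obtain ⟨n, hn⟩ := (hz.frequently (hWo.mem_nhds (hHW hzH))).exists
  exact huW n hn

theorem isClosedMap_mk (hV : IsSqrtChain V) (hq : IsQSequenceAt (1 : G) V) :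
    IsClosedMap (QuotientGroup.mk : G → G ⧸ hV.subgroup) := by
  intro F hF
  rw [← (QuotientGroup.isQuotientMap_mk _).isClosed_preimage,
    QuotientGroup.preimage_image_mk_eq_mul]
  refine isClosed_of_closure_subset fun g hg => ?_
  have hnhds : ∀ n, (g⁻¹ * ·) ⁻¹' V n ∈ 𝓝 g := fun n =>
    ((hV.isOpen n).preimage (continuous_const_mul _)).mem_nhds (by simpa using hV.one_mem n)
  choose p hpV hpF using fun n => mem_closure_iff_nhds.1 hg _ (hnhds (n + 1))
  choose f hf h hh hfh using fun n => mem_mul.1 (hpF n)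
  -- `g⁻¹ * f n` is small, so it clusters at some `z` in the subgroup, and `g * z ∈ F`
  have hu : ∀ n, g⁻¹ * f n ∈ V n := fun n => by
    have hfn : g⁻¹ * f n = (g⁻¹ * p n) * (h n)⁻¹ := by rw [← hfh n]; group
    exact hfn ▸ hV.mul_subset n
      (mul_mem_mul (hpV n) (hV.mem_subgroup.1 (hV.subgroup.inv_mem (hh n)) (n + 1)))
  obtain ⟨z, hzH, hz⟩ := hV.exists_mapClusterPt_mem_subgroup hq hu
  have hgz : MapClusterPt (g * z) atTop f := by
    simpa [Function.comp_def] using hz.continuousAt_comp (continuous_const_mul g).continuousAt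
  exact ⟨g * z, hF.mem_of_mapClusterPt hgz (Eventually.of_forall hf), z⁻¹,
    hV.subgroup.inv_mem hzH, by group⟩

end IsSqrtChain

theorem isSqrtChain_conjChain {V : ℕ → Set G} (hV : IsSqrtChain V) (d : ℕ → G) :
    IsSqrtChain (conjChain V d) where
  isOpen m := by
    have heq : conjChain V d m = ⋂ i ∈ Iic m, (fun g => (d i)⁻¹ * g * d i) ⁻¹' V m := by
      ext; simp [conjChain]
    rw [heq]
    exact (finite_Iic m).isOpen_biInter fun i _ => (hV.isOpen m).preimage (by fun_prop)
  one_mem m i _ := by simpa using hV.one_mem m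
  inv_mem m g hg i hi := by
    have hconj : (d i)⁻¹ * g⁻¹ * d i = ((d i)⁻¹ * g * d i)⁻¹ := by group
    exact hconj ▸ hV.inv_mem m _ (hg i hi)
  mul_subset m := by
    rintro _ ⟨g, hg, h, hh, rfl⟩ i hi
    have hconj : (d i)⁻¹ * (g * h) * d i = ((d i)⁻¹ * g * d i) * ((d i)⁻¹ * h * d i) := by group
    exact hconj ▸ hV.mul_subset m (mul_mem_mul (hg i (by omega)) (hh i (by omega)))

theorem OmegaNarrow.exists_normal_subgroup (hN : OmegaNarrow G) (hQ : QSpace G) {O : Set G}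
    (hO : IsOpen O) (hO1 : (1 : G) ∈ O) :
    ∃ H : Subgroup G, H.Normal ∧ IsCountablyCompactIn (H : Set G) ∧
      HasCountableCharacter (H : Set G) ∧ (H : Set G) ⊆ O ∧
      IsClosedMap (QuotientGroup.mk : G → G ⧸ H) ∧
      (∀ y : G ⧸ H, IsCountablyCompactIn ((QuotientGroup.mk : G → G ⧸ H) ⁻¹' {y})) ∧
      SeparableSpace (G ⧸ H) ∧ MetrizableSpace (G ⧸ H) := by
  obtain ⟨U, hU⟩ := hQ 1
  obtain ⟨V, hV, hVUO⟩ := exists_isSqrtChain_subset (fun n => U n ∩ O) fun n =>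
    inter_mem ((hU.1 n).1.mem_nhds (hU.1 n).2) (hO.mem_nhds hO1)
  obtain ⟨d, hd0, hd⟩ := hN.exists_seq_range_mul_eq_univ hV.isOpen hV.one_mem
  have hB := isSqrtChain_conjChain hV d
  have hBV : ∀ n, conjChain V d n ⊆ U n ∩ O := fun n => (conjChain_subset hd0 n).trans (hVUO n)
  have hq : IsQSequenceAt (1 : G) (conjChain V d) :=
    hU.mono hB.isOpen hB.one_mem fun n => (hBV n).trans inter_subset_left
  have hcc := hB.isCountablyCompactIn_subgroup hq
  have hchar := hB.hasCountableCharacter_subgroup hq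
  have : hB.subgroup.Normal := normal_subgroup_conjChain hV hB hd
  have : IsClosed (hB.subgroup : Set G) := hB.isClosed_subgroup
  have := QuotientGroup.isCountablyGenerated_nhds_one hchar
  have := (hN.of_surjective QuotientGroup.continuous_mk
    (QuotientGroup.mk'_surjective hB.subgroup)).separableSpace
  have := IsTopologicalGroup.secondCountableTopology_of_separable (G := G ⧸ hB.subgroup)
  exact ⟨hB.subgroup, inferInstance, hcc, hchar,
    fun g hg => inter_subset_right (hBV 0 (hB.mem_subgroup.1 hg 0)), hB.isClosedMap_mk hq,
    QuotientGroup.isCountablyCompactIn_preimage_mk hcc, inferInstance,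
    metrizableSpace_of_t3_secondCountable _⟩

end SqrtChain

theorem omegaNarrow_and_qSpace_iff_general (G : Type*) [Group G] [TopologicalSpace G] [IsTopologicalGroup G] :
    (OmegaNarrow G ∧ QSpace G) ↔
      ∀ O : Set G, IsOpen O → (1 : G) ∈ O →
        ∃ H : Subgroup G, H.Normal ∧ IsCountablyCompactIn (H : Set G) ∧
          HasCountableCharacter (H : Set G) ∧ (H : Set G) ⊆ O ∧
          IsClosedMap (QuotientGroup.mk : G → G ⧸ H) ∧
          (∀ y : G ⧸ H, IsCountablyCompactIn ((QuotientGroup.mk : G → G ⧸ H) ⁻¹' {y})) ∧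
          SeparableSpace (G ⧸ H) ∧ MetrizableSpace (G ⧸ H) := by
  refine ⟨fun ⟨hN, hQ⟩ O hO hO1 => hN.exists_normal_subgroup hQ hO hO1, fun h => ?_⟩
  obtain ⟨H, -, hcc, -, -, hcl, hfib, hsep, hmet⟩ := h univ isOpen_univ (mem_univ 1)
  exact ⟨omegaNarrow_of_isCountablyCompactIn_of_separableSpace hcc,
    qSpace_of_isClosedMap QuotientGroup.continuous_mk hcl hfib⟩

theorem omegaNarrow_and_qSpace_iff (G : Type*) [Group G] [TopologicalSpace G] [IsTopologicalGroup G] [T2Space G] :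
    (OmegaNarrow G ∧ QSpace G) ↔
      ∀ O : Set G, IsOpen O → (1 : G) ∈ O →
        ∃ H : Subgroup G, H.Normal ∧ IsCountablyCompactIn (H : Set G) ∧
          HasCountableCharacter (H : Set G) ∧ (H : Set G) ⊆ O ∧
          IsClosedMap (QuotientGroup.mk : G → G ⧸ H) ∧
          (∀ y : G ⧸ H, IsCountablyCompactIn ((QuotientGroup.mk : G → G ⧸ H) ⁻¹' {y})) ∧
          SeparableSpace (G ⧸ H) ∧ MetrizableSpace (G ⧸ H) :=
  omegaNarrow_and_qSpace_iff_general G
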